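/- arXiv:2109.12233 — 2 statements merged into one kernel-verified Lean document; each statement's English description precedes it below -/
import Mathlib

section
/- Define α: Z₂[ε]/(ε², 2ε) → Z₂[ε]/(ε², 2ε) by α(r + dε) = (r² + r)/2 + (rd + r + d)ε. Then α satisfies the functional equation α(x + y) − α(x) − α(y) = xy for all x, y. -/
open Polynomial

/-- The ideal `(ε², 2ε)` in `ℤ₂[ε]`. -/
noncomputable def Reps : Ideal (Polynomial ℤ_[2]) :=
  Ideal.span ({X ^ 2, 2 * X} : Set (Polynomial ℤ_[2]))

/-- The ring `R = ℤ₂[ε]/(ε², 2ε)`. -/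
abbrev R2 := Polynomial ℤ_[2] ⧸ Reps

/-- The class of `ε` in `R`. -/
noncomputable def eps : R2 := Ideal.Quotient.mk Reps X

/-- The canonical map `ℤ₂ → R`. -/
noncomputable def ι : ℤ_[2] →+* R2 := (Ideal.Quotient.mk Reps).comp (C : ℤ_[2] →+* Polynomial ℤ_[2])

/-- The operation `α(r + dε) = (r² + r)/2 + (rd + r + d)ε` on `R = ℤ₂[ε]/(ε², 2ε)`
satisfies the functional equation `α(x+y) − α(x) − α(y) = xy`.
The halves are encoded by elements `s, s', t` with `2s = r² + r`, etc. -/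
theorem stmt7 (r d r' d' s s' t : ℤ_[2])
    (hs : 2 * s = r ^ 2 + r) (hs' : 2 * s' = r' ^ 2 + r')
    (ht : 2 * t = (r + r') ^ 2 + (r + r')) :
    (ι t + ι ((r + r') * (d + d') + (r + r') + (d + d')) * eps)
      - (ι s + ι (r * d + r + d) * eps)
      - (ι s' + ι (r' * d' + r' + d') * eps)
    = (ι r + ι d * eps) * (ι r' + ι d' * eps) := by
  have key : t = s + s' + r * r' := by
    have h2 : (2 : ℤ_[2]) ≠ 0 := two_ne_zero
    apply mul_left_cancel₀ h2
    linear_combination ht - hs - hs'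
  have heps2 : eps * eps = 0 := by
    show Ideal.Quotient.mk Reps X * Ideal.Quotient.mk Reps X = 0
    rw [← map_mul, Ideal.Quotient.eq_zero_iff_mem]
    have : (X : Polynomial ℤ_[2]) * X = X ^ 2 := by ring
    rw [this]
    exact Ideal.subset_span (Set.mem_insert _ _)
  simp only [key, map_add, map_mul]
  linear_combination (- ι d * ι d') * heps2
end

section
/- Let k be a field of characteristic ≠ 2, (V, b) a nondegenerate symmetric bilinear space of dimension r, and B the induced form on Sym²(V) given by B(u·v, u'·v') = b(u,u')b(v,v') + b(u,v')b(u',v). Then det(B) = 2^r · det(b)^{r−1} in k×/(k×)². -/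
/-!
Diagonalise `b` in an orthogonal basis `f` with `b(fᵢ, fᵢ) = λᵢ ≠ 0`. The products `fᵢ·fⱼ`
(`i ≤ j`) again form a basis of `Sym²(V)`, and in it `B` is diagonal: `B(fᵢ·fⱼ, fᵢ·fⱼ)` is
`2λᵢ²` if `i = j` and `λᵢλⱼ` otherwise. Each `λᵢ` occurs in `r + 1` of these entries, so
`det B = 2^r (∏ λᵢ)^(r+1)`, while `det b = ∏ λᵢ`; changing bases only multiplies Gram
determinants by nonzero squares.
-/

open Module Finset

theorem LinearMap.toMatrix₂_eq_of {R M₁ M₂ n m : Type*} [CommRing R] [AddCommGroup M₁]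
    [Module R M₁] [AddCommGroup M₂] [Module R M₂] [Fintype n] [Fintype m] [DecidableEq n]
    [DecidableEq m] (b₁ : Basis n R M₁) (b₂ : Basis m R M₂) (B : M₁ →ₗ[R] M₂ →ₗ[R] R) :
    LinearMap.toMatrix₂ b₁ b₂ B = Matrix.of fun i j => B (b₁ i) (b₂ j) :=
  Matrix.ext fun i j => LinearMap.toMatrix₂_apply b₁ b₂ B i j

theorem LinearMap.det_toMatrix₂_basis_change {R M ι : Type*} [CommRing R] [AddCommGroup M]
    [Module R M] [Fintype ι] [DecidableEq ι] (b c : Basis ι R M) (B : M →ₗ[R] M →ₗ[R] R) :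
    (LinearMap.toMatrix₂ c c B).det = b.det c ^ 2 * (LinearMap.toMatrix₂ b b B).det := by
  rw [← LinearMap.toMatrix₂_mul_basis_toMatrix (b₁ := b) (b₂ := b), Matrix.det_mul,
    Matrix.det_mul, Matrix.det_transpose, b.det_apply]
  ring

theorem LinearMap.IsOrthoᵢ.toMatrix₂_eq_diagonal {R M ι : Type*} [CommRing R] [AddCommGroup M]
    [Module R M] [Fintype ι] [DecidableEq ι] {b : Basis ι R M} {B : M →ₗ[R] M →ₗ[R] R}
    (hB : B.IsOrthoᵢ b) : LinearMap.toMatrix₂ b b B = Matrix.diagonal fun i => B (b i) (b i) := by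
  ext i j
  rw [LinearMap.toMatrix₂_apply]
  obtain rfl | hij := eq_or_ne i j
  · rw [Matrix.diagonal_apply_eq]
  · rw [Matrix.diagonal_apply_ne _ hij, hB hij]

theorem LinearMap.exists_orthogonal_basis_of_separatingLeft {k V ι : Type*} [Field k]
    [AddCommGroup V] [Module k V] [Fintype ι] [Invertible (2 : k)] (e : Basis ι k V)
    {b : V →ₗ[k] V →ₗ[k] k} (hbs : b.IsSymm) (hbn : b.SeparatingLeft) :
    ∃ f : Basis ι k V, b.IsOrthoᵢ f ∧ ∀ i, b (f i) (f i) ≠ 0 := by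
  have : FiniteDimensional k V := .of_basis e
  obtain ⟨f, hf⟩ := LinearMap.BilinForm.exists_orthogonal_basis hbs
  refine ⟨f.reindex (f.indexEquiv e), ?_, fun i => ?_⟩
  · rw [LinearMap.isOrthoᵢ_def]
    intro i j hij
    simpa using LinearMap.isOrthoᵢ_def.mp hf _ _ ((f.indexEquiv e).symm.injective.ne hij)
  · simpa using hf.not_isOrtho_basis_self_of_separatingLeft hbn _

section SymmPairs

variable {ι M : Type*} [Fintype ι] [LinearOrder ι] [CommMonoid M]

theorem card_filter_le_add_card_filter_ge (i : ι) :
    #{j | i ≤ j} + #{j | j ≤ i} = Fintype.card ι + 1 := by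
  rw [← card_union_add_card_inter, ← filter_or, ← filter_and]
  have hunion : ({j | i ≤ j ∨ j ≤ i} : Finset ι) = univ :=
    filter_true_of_mem fun j _ => le_total i j
  have hinter : ({j | i ≤ j ∧ j ≤ i} : Finset ι) = {i} := by
    ext j
    simp [le_antisymm_iff, and_comm]
  rw [hunion, hinter, card_univ, card_singleton]

theorem prod_symmPairs (F : ι → ι → M) :
    ∏ p : {p : ι × ι // p.1 ≤ p.2}, F p.1.1 p.1.2 = ∏ i, ∏ j with i ≤ j, F i j := by
  rw [← prod_subtype ({p | p.1 ≤ p.2} : Finset (ι × ι)) (by simp) (fun p => F p.1 p.2),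
    prod_filter, Fintype.prod_prod_type]
  simp_rw [prod_filter]

theorem prod_symmPairs_mul (lam : ι → M) :
    ∏ p : {p : ι × ι // p.1 ≤ p.2}, lam p.1.1 * lam p.1.2 =
      (∏ i, lam i) ^ (Fintype.card ι + 1) := by
  have hswap : ∏ i, ∏ j with i ≤ j, lam j = ∏ j, lam j ^ #{i | i ≤ j} := by
    simp_rw [prod_filter]
    rw [prod_comm]
    simp_rw [← prod_filter, prod_const]
  rw [prod_symmPairs (fun i j => lam i * lam j)]
  simp_rw [prod_mul_distrib, prod_const]
  rw [hswap, ← prod_mul_distrib, ← prod_pow]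
  simp_rw [← pow_add, card_filter_le_add_card_filter_ge]

theorem prod_symmPairs_ite_eq (a : M) :
    ∏ p : {p : ι × ι // p.1 ≤ p.2}, (if p.1.1 = p.1.2 then a else 1) = a ^ Fintype.card ι := by
  rw [prod_symmPairs (fun i j => if i = j then a else 1), ← card_univ, ← prod_const]
  refine prod_congr rfl fun i _ => ?_
  rw [prod_ite_eq, if_pos (by simp)]

end SymmPairs

section SymmProducts

variable {k V S ι : Type*} [Field k] [AddCommGroup V] [Module k V] [AddCommGroup S] [Module k S]
  [LinearOrder ι]

def symmProducts (m : V →ₗ[k] V →ₗ[k] S) (f : ι → V) : {p : ι × ι // p.1 ≤ p.2} → S :=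
  fun p => m (f p.1.1) (f p.1.2)

theorem apply_mem_span_symmProducts {m : V →ₗ[k] V →ₗ[k] S} (hm : ∀ u v, m u v = m v u)
    (f : Basis ι k V) (u v : V) : m u v ∈ Submodule.span k (Set.range (symmProducts m f)) := by
  have hbasis : ∀ i j, m (f i) (f j) ∈ Submodule.span k (Set.range (symmProducts m f)) := by
    intro i j
    rcases le_total i j with h | h
    · exact Submodule.subset_span ⟨⟨(i, j), h⟩, rfl⟩
    · rw [hm]
      exact Submodule.subset_span ⟨⟨(j, i), h⟩, rfl⟩
  have hmap : Submodule.map₂ m (Submodule.span k (Set.range f))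
      (Submodule.span k (Set.range f)) ≤ Submodule.span k (Set.range (symmProducts m f)) := by
    rw [Submodule.map₂_span_span, Submodule.span_le]
    rintro _ ⟨_, ⟨i, rfl⟩, _, ⟨j, rfl⟩, rfl⟩
    exact hbasis i j
  exact hmap (Submodule.apply_mem_map₂ m (f.span_eq ▸ Submodule.mem_top)
    (f.span_eq ▸ Submodule.mem_top))

theorem exists_basis_symmProducts [Fintype ι] {m : V →ₗ[k] V →ₗ[k] S}
    (hm : ∀ u v, m u v = m v u) {e : Basis ι k V} (se : Basis {p : ι × ι // p.1 ≤ p.2} k S)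
    (hse : ⇑se = symmProducts m e) (f : Basis ι k V) :
    ∃ s : Basis {p : ι × ι // p.1 ≤ p.2} k S, ⇑s = symmProducts m f := by
  have hspan : ⊤ ≤ Submodule.span k (Set.range (symmProducts m f)) := by
    rw [← se.span_eq, Submodule.span_le, hse]
    rintro _ ⟨p, rfl⟩
    exact apply_mem_span_symmProducts hm f _ _
  exact ⟨basisOfTopLeSpanOfCardEqFinrank _ hspan (finrank_eq_card_basis se).symm,
    coe_basisOfTopLeSpanOfCardEqFinrank _ _ _⟩

theorem toMatrix₂_symmProducts_eq_diagonal [Fintype ι] {b : V →ₗ[k] V →ₗ[k] k}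
    {m : V →ₗ[k] V →ₗ[k] S} {B : S →ₗ[k] S →ₗ[k] k}
    (hB : ∀ u v u' v', B (m u v) (m u' v') = b u u' * b v v' + b u v' * b u' v)
    {f : Basis ι k V} (hf : b.IsOrthoᵢ f) {s : Basis {p : ι × ι // p.1 ≤ p.2} k S}
    (hs : ⇑s = symmProducts m f) :
    LinearMap.toMatrix₂ s s B = Matrix.diagonal fun p =>
      (if p.1.1 = p.1.2 then 2 else 1) * (b (f p.1.1) (f p.1.1) * b (f p.1.2) (f p.1.2)) := by
  ext ⟨⟨i, j⟩, hij : i ≤ j⟩ ⟨⟨a, c⟩, hac : a ≤ c⟩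
  simp only [LinearMap.toMatrix₂_apply, hs, symmProducts, hB, Matrix.diagonal_apply,
    Subtype.mk.injEq, Prod.mk.injEq]
  split_ifs with hpq hdiag
  · obtain ⟨rfl, rfl⟩ := hpq
    subst hdiag
    ring
  · obtain ⟨rfl, rfl⟩ := hpq
    rw [hf hdiag]
    ring
  · have hdirect : b (f i) (f a) * b (f j) (f c) = 0 := by
      rcases not_and_or.mp hpq with h | h
      · rw [hf h, zero_mul]
      · rw [hf h, mul_zero]
    have hcrossed : b (f i) (f c) * b (f a) (f j) = 0 := by
      by_cases hic : i = c
      · have haj : a ≠ j := by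
          rintro rfl
          exact hpq ⟨by order, by order⟩
        rw [hf haj, mul_zero]
      · rw [hf hic, zero_mul]
    rw [hdirect, hcrossed, add_zero]

end SymmProducts

/-- Let `k` be a field of characteristic `≠ 2`, `(V, b)` a nondegenerate symmetric
bilinear space of dimension `r` with basis `e`, and `B` the induced form on `Sym²(V)`
(presented via a symmetric multiplication `m2` whose products of basis vectors
`{eᵢ·eⱼ}_{i≤j}` form a basis), given by `B(u·v, u'·v') = b(u,u')b(v,v') + b(u,v')b(u',v)`.
Then `det(B) = 2^r · det(b)^{r−1}` in `kˣ/(kˣ)²`, where determinants are taken with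
respect to Gram matrices for the chosen bases. -/
theorem stmt15 {k V S : Type*} [Field k] [AddCommGroup V] [Module k V]
    [AddCommGroup S] [Module k S] (hchar : ringChar k ≠ 2) {r : ℕ}
    (e : Module.Basis (Fin r) k V) (b : V →ₗ[k] V →ₗ[k] k)
    (hbs : ∀ u v, b u v = b v u)
    (hbn : ∀ v, (∀ w, b v w = 0) → v = 0)
    (m2 : V →ₗ[k] V →ₗ[k] S)
    (hm2s : ∀ u v, m2 u v = m2 v u)
    (sb : Module.Basis {p : Fin r × Fin r // p.1 ≤ p.2} k S)
    (hsb : ∀ p : {p : Fin r × Fin r // p.1 ≤ p.2}, sb p = m2 (e p.1.1) (e p.1.2))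
    (B : S →ₗ[k] S →ₗ[k] k)
    (hB : ∀ u v u' v' : V,
      B (m2 u v) (m2 u' v') = b u u' * b v v' + b u v' * b u' v) :
    ∃ u : k, u ≠ 0 ∧
      (Matrix.of fun p q : {p : Fin r × Fin r // p.1 ≤ p.2} => B (sb p) (sb q)).det
        = u ^ 2 * (2 ^ r * (Matrix.of fun i j : Fin r => b (e i) (e j)).det ^ (r - 1)) := by
  have : Invertible (2 : k) := invertibleOfNonzero (Ring.two_ne_zero hchar)
  obtain ⟨f, hf, hlam⟩ := LinearMap.exists_orthogonal_basis_of_separatingLeft e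
    (LinearMap.isSymm_iff_eq_flip.mpr (by ext; exact hbs _ _)) hbn
  obtain ⟨s, hs⟩ := exists_basis_symmProducts hm2s sb (funext hsb) f
  set L := ∏ i, b (f i) (f i)
  have hL : L ≠ 0 := prod_ne_zero_iff.mpr fun i _ => hlam i
  have hdet_b : L = e.det f ^ 2 * (LinearMap.toMatrix₂ e e b).det := by
    rw [← LinearMap.det_toMatrix₂_basis_change, hf.toMatrix₂_eq_diagonal, Matrix.det_diagonal]
  have hdet_B : 2 ^ r * L ^ (r + 1) = sb.det s ^ 2 * (LinearMap.toMatrix₂ sb sb B).det := by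
    rw [← LinearMap.det_toMatrix₂_basis_change, toMatrix₂_symmProducts_eq_diagonal hB hf hs,
      Matrix.det_diagonal, prod_mul_distrib, prod_symmPairs_ite_eq,
      prod_symmPairs_mul fun i => b (f i) (f i), Fintype.card_fin]
  have hsquare : L ^ (r + 1) =
      (L * e.det f ^ (r - 1)) ^ 2 * (LinearMap.toMatrix₂ e e b).det ^ (r - 1) := by
    cases r with
    | zero => simp [L]
    | succ n =>
      rw [Nat.add_sub_cancel, hdet_b]
      ring
  have hef := (e.isUnit_det f).ne_zero
  have hsbs := (sb.isUnit_det s).ne_zero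
  refine ⟨L * e.det f ^ (r - 1) / sb.det s, by positivity, ?_⟩
  rw [← LinearMap.toMatrix₂_eq_of, ← LinearMap.toMatrix₂_eq_of]
  field_simp
  linear_combination hdet_B.symm + 2 ^ r * hsquare
end
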